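/- Let Φ be a homogeneous Poisson point process on (0,∞) with intensity λ and i.i.d. Exponential(μ) marks. Fix x < 0 and h > 0 and define tan Θᴿ_{x,h} = sup_{x_i ∈ Φ} (h_i − h)₊/(x_i − x). Then P[tan Θᴿ_{x,h} ≤ t] = exp(−(ρ/t)·e^{−μh}·e^{μtx}) for t > 0, with ρ = λ/μ. -/

import Mathlib

/-!
Put `c = h₀ - t x`. Almost surely every gap is positive, so `xᵢ - x > 0` and the event says that
every mark lies below the line `u ↦ c + t u` through the arrival times: `hᵢ ≤ c + t xᵢ`.
Conditioning on the first gap and mark shows that `Aₙ(b)`, the probability that the first `n`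
marks lie below `u ↦ b + t u`, satisfies
`Aₙ₊₁(b) = ∫ (1 - e^{-μ(b+ts)}) Aₙ(b+ts) dExp(λ)(s)` with `A₀ = 1`.
The function `L(b) = exp(-m(b))`, where `m(b) = λ/(μt) e^{-μb}` is the expected number of Poisson
points above the line, is a fixed point of this recursion, and induction gives
`L ≤ Aₙ ≤ L + m · (λ/(λ+μt))ⁿ`: since `m(b + ts) = m(b) e^{-μts}`, each step multiplies the error
by `E e^{-μtS} = λ/(λ+μt)` for `S ~ Exp(λ)`. Hence `Aₙ(c) → L(c)`, which is the claimed value.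
-/

open MeasureTheory ProbabilityTheory Real Set Filter
open scoped ENNReal Topology

lemma MeasurableSpace.comap_precomp_pi_le {Ω ι κ β : Type*} [MeasurableSpace β]
    (f : ι → Ω → β) (σ : κ → ι) :
    MeasurableSpace.comap (fun ω k => f (σ k) ω) MeasurableSpace.pi
      ≤ ⨆ i ∈ range σ, MeasurableSpace.comap (f i) ‹_› := by
  simp_rw [MeasurableSpace.pi, MeasurableSpace.comap_iSup, MeasurableSpace.comap_comp]
  exact iSup_le fun k => le_iSup₂_of_le (σ k) (mem_range_self k) le_rfl

lemma ProbabilityTheory.iIndepFun.indepFun_precomp_of_disjoint_range {Ω ι κ₁ κ₂ β : Type*}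
    [MeasurableSpace Ω] [MeasurableSpace β] {P : Measure Ω} {f : ι → Ω → β}
    (hf : iIndepFun f P) (hmeas : ∀ i, Measurable (f i)) {σ₁ : κ₁ → ι} {σ₂ : κ₂ → ι}
    (hσ : Disjoint (range σ₁) (range σ₂)) :
    IndepFun (fun ω k => f (σ₁ k) ω) (fun ω k => f (σ₂ k) ω) P := by
  rw [IndepFun_iff_Indep]
  exact indep_of_indep_of_le_right
    (indep_of_indep_of_le_left (indep_iSup_of_disjoint (fun i => (hmeas i).comap_le) hf.iIndep hσ)
      (MeasurableSpace.comap_precomp_pi_le f σ₁)) (MeasurableSpace.comap_precomp_pi_le f σ₂)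

instance MeasureTheory.isProbabilityMeasure_sumElim {ι κ X : Type*} [MeasurableSpace X]
    (μ : ι → Measure X) (ν : κ → Measure X) [∀ i, IsProbabilityMeasure (μ i)]
    [∀ j, IsProbabilityMeasure (ν j)] (i : ι ⊕ κ) : IsProbabilityMeasure (Sum.elim μ ν i) := by
  cases i <;> dsimp only [Sum.elim_inl, Sum.elim_inr] <;> infer_instance

lemma MeasureTheory.lintegral_Ioi_ofReal_of_hasDerivAt_of_nonneg {g g' : ℝ → ℝ} {a l : ℝ}
    (hderiv : ∀ x ∈ Ici a, HasDerivAt g (g' x) x) (hg' : ∀ x ∈ Ioi a, 0 ≤ g' x)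
    (hg : Tendsto g atTop (𝓝 l)) :
    ∫⁻ x in Ioi a, ENNReal.ofReal (g' x) = ENNReal.ofReal (l - g a) := by
  rw [← ofReal_integral_eq_lintegral_ofReal (integrableOn_Ioi_deriv_of_nonneg' hderiv hg' hg)
    ((ae_restrict_iff' measurableSet_Ioi).2 (ae_of_all _ hg')),
    integral_Ioi_of_hasDerivAt_of_nonneg' hderiv hg' hg]

namespace ProbabilityTheory

lemma expMeasure_Iic {r : ℝ} (hr : 0 < r) (s : ℝ) :
    expMeasure r (Iic s) = ENNReal.ofReal (1 - exp (-(r * s))) := by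
  have := isProbabilityMeasure_expMeasure hr
  rw [← ofReal_cdf, cdf_expMeasure_eq hr]
  split_ifs with hs
  · rfl
  · rw [ENNReal.ofReal_zero, eq_comm, ENNReal.ofReal_eq_zero, sub_nonpos, one_le_exp_iff]
    nlinarith

lemma map_eq_expMeasure {Ω : Type*} [MeasurableSpace Ω] {P : Measure Ω} [IsProbabilityMeasure P]
    {f : Ω → ℝ} (hf : Measurable f) {r : ℝ} (hr : 0 < r)
    (hcdf : ∀ s, 0 ≤ s → P {ω | f ω ≤ s} = ENNReal.ofReal (1 - exp (-(r * s)))) :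
    P.map f = expMeasure r := by
  refine Measure.ext_of_Iic _ _ fun s => ?_
  rw [Measure.map_apply hf measurableSet_Iic, expMeasure_Iic hr]
  rcases le_or_gt 0 s with hs | hs
  · exact hcdf s hs
  · have hnull : P {ω | f ω ≤ 0} = 0 := by simpa using hcdf 0 le_rfl
    rw [measure_mono_null (s := f ⁻¹' Iic s) (fun ω hω => le_trans hω hs.le) hnull, eq_comm,
      ENNReal.ofReal_eq_zero, sub_nonpos, one_le_exp_iff]
    nlinarith

lemma ae_nonneg_expMeasure (r : ℝ) : ∀ᵐ s ∂expMeasure r, 0 ≤ s := by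
  rw [ae_iff]
  simp only [not_le]
  change expMeasure r (Iio 0) = 0
  rw [expMeasure, gammaMeasure, withDensity_apply _ measurableSet_Iio]
  exact lintegral_gammaPDF_of_nonpos le_rfl

lemma lintegral_expMeasure {r : ℝ} (f : ℝ → ℝ≥0∞) :
    ∫⁻ s, f s ∂expMeasure r = ∫⁻ s in Ioi 0, ENNReal.ofReal (r * exp (-(r * s))) * f s := by
  have hmeas : Measurable (gammaPDF 1 r) := (measurable_gammaPDFReal 1 r).ennreal_ofReal
  rw [expMeasure, gammaMeasure, lintegral_withDensity_eq_lintegral_mul_non_measurable _ hmeas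
      (ae_of_all _ fun _ => ENNReal.ofReal_lt_top),
    ← setLIntegral_eq_of_support_subset (s := Ici 0), setLIntegral_congr Ioi_ae_eq_Ici.symm]
  · refine setLIntegral_congr_fun measurableSet_Ioi fun s hs => ?_
    rw [Pi.mul_apply, ← exponentialPDF_of_nonneg (mem_Ioi.1 hs).le]
    rfl
  · intro s hs
    by_contra hneg
    exact hs (by simp [show gammaPDF 1 r s = 0 from gammaPDF_of_neg (not_le.1 hneg)])

lemma lintegral_exp_neg_mul_expMeasure {lam c : ℝ} (hlam : 0 < lam) (hc : 0 ≤ c) :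
    ∫⁻ s, ENNReal.ofReal (exp (-(c * s))) ∂expMeasure lam = ENNReal.ofReal (lam / (lam + c)) := by
  have hlc : 0 < lam + c := by linarith
  have hderiv : ∀ s ∈ Ici (0 : ℝ), HasDerivAt (fun s => -(lam / (lam + c) * exp (-((lam + c) * s))))
      (lam * exp (-(lam * s)) * exp (-(c * s))) s := by
    intro s _
    refine (((hasDerivAt_id s).const_mul (lam + c)).fun_neg.exp.const_mul
      (lam / (lam + c))).fun_neg.congr_deriv ?_
    rw [mul_assoc lam, ← exp_add, id]
    field_simp
    ring_nf
  have htend : Tendsto (fun s => -(lam / (lam + c) * exp (-((lam + c) * s)))) atTop (𝓝 0) := by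
    simpa using ((tendsto_exp_neg_atTop_nhds_zero.comp
      (tendsto_id.const_mul_atTop hlc)).const_mul (lam / (lam + c))).neg
  simp_rw [lintegral_expMeasure, ← ENNReal.ofReal_mul (mul_nonneg hlam.le (exp_pos _).le)]
  rw [lintegral_Ioi_ofReal_of_hasDerivAt_of_nonneg hderiv (fun s _ => by positivity) htend]
  simp

end ProbabilityTheory

namespace ReflectiveRIS

/-- Coordinate `Sum.inl j` is the `j`-th gap between arrivals, `Sum.inr i` the `i`-th mark. -/
noncomputable def gapMarkMeasure (α β : Measure ℝ) : Measure (ℕ ⊕ ℕ → ℝ) :=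
  Measure.infinitePi (Sum.elim (fun _ => α) (fun _ => β))

def headTail (w : ℕ ⊕ ℕ → ℝ) : ℝ × ℝ × (ℕ ⊕ ℕ → ℝ) :=
  (w (.inl 0), w (.inr 0), fun j => w (Sum.map Nat.succ Nat.succ j))

@[fun_prop]
lemma measurable_headTail : Measurable headTail := by
  unfold headTail; fun_prop

def belowLine (t b : ℝ) (n : ℕ) : Set (ℕ ⊕ ℕ → ℝ) :=
  {w | ∀ i < n, w (.inr i) ≤ b + t * ∑ j ∈ Finset.range (i + 1), w (.inl j)}

lemma measurableSet_belowLine (t b : ℝ) (n : ℕ) : MeasurableSet (belowLine t b n) := by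
  simp only [belowLine]
  measurability

lemma mem_iInter_belowLine {t b : ℝ} {w : ℕ ⊕ ℕ → ℝ} :
    w ∈ ⋂ n, belowLine t b n ↔ ∀ i, w (.inr i) ≤ b + t * ∑ j ∈ Finset.range (i + 1), w (.inl j) :=
  mem_iInter.trans ⟨fun hw i => hw (i + 1) i i.lt_add_one, fun hw _ i _ => hw i⟩

lemma belowLine_succ (t b : ℝ) (n : ℕ) :
    belowLine t b (n + 1)
      = headTail ⁻¹' {q | q.2.1 ≤ b + t * q.1 ∧ q.2.2 ∈ belowLine t (b + t * q.1) n} := by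
  ext w
  simp only [belowLine, headTail, mem_preimage, mem_ofPred_eq, Nat.forall_lt_succ_left,
    Finset.sum_range_succ' _ (_ + 1), Sum.map_inl, Sum.map_inr, zero_add, Finset.sum_range_one]
  exact and_congr_right' (forall₂_congr fun _ _ => by rw [mul_add, add_comm (t * _), add_assoc])

section GapMark

variable (α β : Measure ℝ) [IsProbabilityMeasure α] [IsProbabilityMeasure β]

instance : IsProbabilityMeasure (gapMarkMeasure α β) := by
  unfold gapMarkMeasure; infer_instance

lemma map_headTail_gapMarkMeasure :
    (gapMarkMeasure α β).map headTail = α.prod (β.prod (gapMarkMeasure α β)) := by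
  have hdisj : Disjoint (range (Sum.map (fun _ : Unit => 0) (fun _ : Unit => 0)))
      (range (Sum.map Nat.succ Nat.succ)) := by
    rw [Set.disjoint_left]
    rintro _ ⟨(_ | _), rfl⟩ ⟨(_ | _), h⟩ <;> simp at h
  have hindep : IndepFun (fun w : ℕ ⊕ ℕ → ℝ => (w (.inl 0), w (.inr 0)))
      (fun w j => w (Sum.map Nat.succ Nat.succ j)) (gapMarkMeasure α β) :=
    ((iIndepFun_infinitePi (X := fun _ x => x) fun _ => measurable_id)
      |>.indepFun_precomp_of_disjoint_range (fun i => measurable_pi_apply i) hdisj).comp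
      (φ := fun v => (v (.inl ()), v (.inr ()))) (ψ := id) (by fun_prop) measurable_id
  have hhead : (gapMarkMeasure α β).map (fun w => (w (.inl 0), w (.inr 0))) = α.prod β :=
    Measure.infinitePi_map_eval_prod Sum.inl_ne_inr
  have htail : (gapMarkMeasure α β).map (fun w j => w (Sum.map Nat.succ Nat.succ j))
      = gapMarkMeasure α β := by
    rw [gapMarkMeasure, Measure.map_infinitePi_infinitePi_of_inj
      (Sum.map_injective.2 ⟨Nat.succ_injective, Nat.succ_injective⟩)]
    congr 1
    funext j
    cases j <;> rfl
  rw [indepFun_iff_map_prod_eq_prod_map_map (by fun_prop)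
    (measurable_pi_lambda _ fun _ => measurable_pi_apply _).aemeasurable, hhead, htail] at hindep
  rw [← (measurePreserving_prodAssoc α β (gapMarkMeasure α β)).map_eq, ← hindep,
    Measure.map_map (by fun_prop) (by fun_prop)]
  rfl

lemma gapMarkMeasure_belowLine_succ (t b : ℝ) (n : ℕ) :
    gapMarkMeasure α β (belowLine t b (n + 1))
      = ∫⁻ s, β (Iic (b + t * s)) * gapMarkMeasure α β (belowLine t (b + t * s) n) ∂α := by
  have hmeas : MeasurableSet
      {q : ℝ × ℝ × (ℕ ⊕ ℕ → ℝ) | q.2.1 ≤ b + t * q.1 ∧ q.2.2 ∈ belowLine t (b + t * q.1) n} := by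
    simp only [belowLine, mem_ofPred_eq]
    measurability
  rw [belowLine_succ, ← Measure.map_apply measurable_headTail hmeas, map_headTail_gapMarkMeasure,
    Measure.prod_apply hmeas]
  exact lintegral_congr fun s =>
    Measure.prod_prod (Iic (b + t * s)) (belowLine t (b + t * s) n)

end GapMark

lemma map_eq_gapMarkMeasure {Ω : Type*} [MeasurableSpace Ω] {P : Measure Ω}
    {α β : Measure ℝ} {g h : ℕ → Ω → ℝ}
    (hgm : ∀ i, Measurable (g i)) (hhm : ∀ i, Measurable (h i))
    (hindep : iIndepFun (Sum.elim g h) P) (hg : ∀ i, P.map (g i) = α)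
    (hh : ∀ i, P.map (h i) = β) :
    P.map (fun ω j => Sum.elim g h j ω) = gapMarkMeasure α β := by
  rw [hindep.map_fun_eq_infinitePi_map (by rintro (i | i) <;> simp [hgm, hhm]), gapMarkMeasure]
  congr 1
  funext j
  cases j <;> simp [hg, hh]

/-- The expected number of points `(u, m)` of the marked Poisson process with `m > b + t u`,
namely `∫₀^∞ λ e^{-μ(b + t u)} du`. -/
noncomputable def lineMass (lam mu t b : ℝ) : ℝ := lam / (mu * t) * exp (-(mu * b))

section LineMass

variable {lam mu t : ℝ}

lemma lineMass_nonneg (hlam : 0 < lam) (hmu : 0 < mu) (ht : 0 < t) (b : ℝ) :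
    0 ≤ lineMass lam mu t b := by
  unfold lineMass; positivity

@[fun_prop]
lemma continuous_lineMass : Continuous (lineMass lam mu t) := by
  unfold lineMass; fun_prop

lemma lineMass_add_mul (b s : ℝ) :
    lineMass lam mu t (b + t * s) = lineMass lam mu t b * exp (-(mu * t * s)) := by
  rw [lineMass, lineMass, mul_assoc, ← exp_add]; ring_nf

lemma hasDerivAt_lineMass (hmu : 0 < mu) (ht : 0 < t) (b s : ℝ) :
    HasDerivAt (fun s => lineMass lam mu t (b + t * s)) (-(lam * exp (-(mu * (b + t * s))))) s := by
  refine ((((hasDerivAt_id s).const_mul t).const_add b).const_mul mu).fun_neg.exp.const_mul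
    (lam / (mu * t)) |>.congr_deriv ?_
  field_simp
  simp

lemma one_sub_exp_neg_mul_nonneg (hmu : 0 < mu) {u : ℝ} (hu : 0 ≤ u) : 0 ≤ 1 - exp (-(mu * u)) := by
  rw [sub_nonneg, exp_le_one_iff, neg_nonpos]; positivity

lemma lintegral_exp_neg_lineMass (hlam : 0 < lam) (hmu : 0 < mu) (ht : 0 < t) {b : ℝ}
    (hb : 0 ≤ b) :
    ∫⁻ s, ENNReal.ofReal (1 - exp (-(mu * (b + t * s))))
        * ENNReal.ofReal (exp (-lineMass lam mu t (b + t * s))) ∂expMeasure lam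
      = ENNReal.ofReal (exp (-lineMass lam mu t b)) := by
  have hderiv : ∀ s ∈ Ici (0 : ℝ), HasDerivAt
      (fun s => -(exp (-(lam * s)) * exp (-lineMass lam mu t (b + t * s))))
      (lam * exp (-(lam * s)) * ((1 - exp (-(mu * (b + t * s))))
        * exp (-lineMass lam mu t (b + t * s)))) s := by
    intro s _
    refine ((((hasDerivAt_id s).const_mul lam).fun_neg.exp).fun_mul
      (hasDerivAt_lineMass hmu ht b s).fun_neg.exp).fun_neg.congr_deriv ?_
    simp only [id]; ring
  have htend : Tendsto (fun s => -(exp (-(lam * s)) * exp (-lineMass lam mu t (b + t * s))))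
      atTop (𝓝 0) := by
    refine squeeze_zero_norm (fun s => ?_)
      (tendsto_exp_neg_atTop_nhds_zero.comp (tendsto_id.const_mul_atTop hlam))
    rw [norm_neg, norm_mul, Real.norm_of_nonneg (exp_pos _).le,
      Real.norm_of_nonneg (exp_pos _).le]
    exact mul_le_of_le_one_right (exp_pos _).le
      (exp_le_one_iff.2 (neg_nonpos.2 (lineMass_nonneg hlam hmu ht _)))
  have hq : ∀ s : ℝ, 0 < s → 0 ≤ 1 - exp (-(mu * (b + t * s))) := fun s hs =>
    one_sub_exp_neg_mul_nonneg hmu (by positivity)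
  rw [lintegral_expMeasure, setLIntegral_congr_fun measurableSet_Ioi fun s hs => by
    rw [← ENNReal.ofReal_mul (hq s hs), ← ENNReal.ofReal_mul (by positivity)],
    lintegral_Ioi_ofReal_of_hasDerivAt_of_nonneg hderiv
      (fun s hs => by have := hq s hs; positivity) htend]
  simp

end LineMass

structure BelowLineRecursion (lam mu t : ℝ) (A : ℕ → ℝ → ℝ≥0∞) : Prop where
  zero : ∀ b, A 0 b = 1
  succ : ∀ n b, A (n + 1) b
    = ∫⁻ s, ENNReal.ofReal (1 - exp (-(mu * (b + t * s)))) * A n (b + t * s) ∂expMeasure lam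

section Recursion

variable {lam mu t : ℝ} {A : ℕ → ℝ → ℝ≥0∞}

lemma BelowLineRecursion.ofReal_exp_neg_lineMass_le (hA : BelowLineRecursion lam mu t A)
    (hlam : 0 < lam) (hmu : 0 < mu) (ht : 0 < t) (n : ℕ) {b : ℝ} (hb : 0 ≤ b) :
    ENNReal.ofReal (exp (-lineMass lam mu t b)) ≤ A n b := by
  induction n generalizing b with
  | zero =>
    rw [hA.zero]
    exact ENNReal.ofReal_le_one.2 (exp_le_one_iff.2 (neg_nonpos.2 (lineMass_nonneg hlam hmu ht b)))
  | succ n ih =>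
    rw [hA.succ, ← lintegral_exp_neg_lineMass hlam hmu ht hb]
    refine lintegral_mono_ae ?_
    filter_upwards [ae_nonneg_expMeasure lam] with s hs
    gcongr
    exact ih (by positivity)

lemma BelowLineRecursion.le_ofReal_exp_neg_lineMass_add (hA : BelowLineRecursion lam mu t A)
    (hlam : 0 < lam) (hmu : 0 < mu) (ht : 0 < t) (n : ℕ) {b : ℝ} (hb : 0 ≤ b) :
    A n b ≤ ENNReal.ofReal (exp (-lineMass lam mu t b))
      + ENNReal.ofReal (lineMass lam mu t b) * ENNReal.ofReal (lam / (lam + mu * t)) ^ n := by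
  induction n generalizing b with
  | zero =>
    rw [hA.zero, pow_zero, mul_one, ← ENNReal.ofReal_add (exp_pos _).le
      (lineMass_nonneg hlam hmu ht b), ← ENNReal.ofReal_one]
    exact ENNReal.ofReal_le_ofReal (by linarith [add_one_le_exp (-lineMass lam mu t b)])
  | succ n ih =>
    set r := ENNReal.ofReal (lam / (lam + mu * t))
    have hpointwise : ∀ᵐ s ∂expMeasure lam,
        ENNReal.ofReal (1 - exp (-(mu * (b + t * s)))) * A n (b + t * s)
          ≤ ENNReal.ofReal (1 - exp (-(mu * (b + t * s))))
              * ENNReal.ofReal (exp (-lineMass lam mu t (b + t * s)))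
            + ENNReal.ofReal (lineMass lam mu t b) * r ^ n
              * ENNReal.ofReal (exp (-(mu * t * s))) := by
      filter_upwards [ae_nonneg_expMeasure lam] with s hs
      have hq : ENNReal.ofReal (1 - exp (-(mu * (b + t * s)))) ≤ 1 :=
        ENNReal.ofReal_le_one.2 (by linarith [exp_pos (-(mu * (b + t * s)))])
      calc _ ≤ ENNReal.ofReal (1 - exp (-(mu * (b + t * s))))
            * (ENNReal.ofReal (exp (-lineMass lam mu t (b + t * s)))
              + ENNReal.ofReal (lineMass lam mu t (b + t * s)) * r ^ n) := by
            gcongr; exact ih (by positivity)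
        _ ≤ _ := by
            rw [mul_add, lineMass_add_mul, ENNReal.ofReal_mul (lineMass_nonneg hlam hmu ht b),
              mul_right_comm _ _ (r ^ n)]
            exact add_le_add le_rfl (mul_le_of_le_one_left' hq)
    calc A (n + 1) b
        ≤ ∫⁻ s, ENNReal.ofReal (1 - exp (-(mu * (b + t * s))))
              * ENNReal.ofReal (exp (-lineMass lam mu t (b + t * s)))
            + ENNReal.ofReal (lineMass lam mu t b) * r ^ n
              * ENNReal.ofReal (exp (-(mu * t * s))) ∂expMeasure lam := by
          rw [hA.succ]; exact lintegral_mono_ae hpointwise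
      _ = ENNReal.ofReal (exp (-lineMass lam mu t b))
          + ENNReal.ofReal (lineMass lam mu t b) * r ^ n * r := by
          rw [lintegral_add_left (by fun_prop), lintegral_const_mul _ (by fun_prop),
            lintegral_exp_neg_lineMass hlam hmu ht hb,
            lintegral_exp_neg_mul_expMeasure hlam (by positivity)]
      _ = _ := by rw [pow_succ, mul_assoc]

lemma BelowLineRecursion.tendsto (hA : BelowLineRecursion lam mu t A)
    (hlam : 0 < lam) (hmu : 0 < mu) (ht : 0 < t) {b : ℝ} (hb : 0 ≤ b) :
    Tendsto (fun n => A n b) atTop (𝓝 (ENNReal.ofReal (exp (-lineMass lam mu t b)))) := by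
  have hr : ENNReal.ofReal (lam / (lam + mu * t)) < 1 := by
    rw [ENNReal.ofReal_lt_one, div_lt_one (by positivity)]
    linarith [mul_pos hmu ht]
  have hupper := (ENNReal.Tendsto.const_mul (ENNReal.tendsto_pow_atTop_nhds_zero_of_lt_one hr)
    (Or.inr (ENNReal.ofReal_ne_top (r := lineMass lam mu t b)))).const_add
      (ENNReal.ofReal (exp (-lineMass lam mu t b)))
  rw [mul_zero, add_zero] at hupper
  exact tendsto_of_tendsto_of_tendsto_of_le_of_le tendsto_const_nhds hupper
    (fun n => hA.ofReal_exp_neg_lineMass_le hlam hmu ht n hb)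
    (fun n => hA.le_ofReal_exp_neg_lineMass_add hlam hmu ht n hb)

end Recursion

lemma belowLineRecursion_gapMarkMeasure {lam mu t : ℝ} (hlam : 0 < lam) (hmu : 0 < mu) :
    BelowLineRecursion lam mu t
      fun n b => gapMarkMeasure (expMeasure lam) (expMeasure mu) (belowLine t b n) := by
  have := isProbabilityMeasure_expMeasure hlam
  have := isProbabilityMeasure_expMeasure hmu
  refine ⟨fun b => by simp [belowLine], fun n b => ?_⟩
  simp only [gapMarkMeasure_belowLine_succ, expMeasure_Iic hmu]

lemma gapMarkMeasure_iInter_belowLine {lam mu t b : ℝ} (hlam : 0 < lam) (hmu : 0 < mu)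
    (ht : 0 < t) (hb : 0 ≤ b) :
    gapMarkMeasure (expMeasure lam) (expMeasure mu) (⋂ n, belowLine t b n)
      = ENNReal.ofReal (exp (-lineMass lam mu t b)) := by
  have := isProbabilityMeasure_expMeasure hlam
  have := isProbabilityMeasure_expMeasure hmu
  have hanti : Antitone (belowLine t b) := fun m n hmn w hw i hi => hw i (hi.trans_le hmn)
  exact tendsto_nhds_unique (tendsto_measure_iInter_atTop
    (fun n => (measurableSet_belowLine t b n).nullMeasurableSet) hanti ⟨0, measure_ne_top _ _⟩)
    ((belowLineRecursion_gapMarkMeasure hlam hmu).tendsto hlam hmu ht hb)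

end ReflectiveRIS

open ReflectiveRIS

lemma max_sub_zero_div_le_iff {a a₀ d t : ℝ} (hd : 0 < d) (ht : 0 ≤ t) :
    max (a - a₀) 0 / d ≤ t ↔ a ≤ a₀ + t * d := by
  rw [div_le_iff₀ hd, max_le_iff, sub_le_iff_le_add', and_iff_left (by positivity)]

/-- reflective-RIS blockage tangent. For a homogeneous PPP on
(0,∞) with intensity λ (arrival-time representation) with i.i.d. Exp(μ) marks,
an observer at (x, h) with x < 0, h > 0 sees
P[sup_i (h_i − h)₊/(x_i − x) ≤ t] = exp(−(ρ/t)·e^{−μh}·e^{μtx}), ρ = λ/μ. -/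
theorem reflective_RIS_tangent_cdf
    {Ω : Type*} [MeasurableSpace Ω] (P : Measure Ω) [IsProbabilityMeasure P]
    (lam mu : ℝ) (hlam : 0 < lam) (hmu : 0 < mu)
    (x h0 : ℝ) (hx0 : x < 0) (hh0 : 0 < h0)
    (g h : ℕ → Ω → ℝ)
    (hgm : ∀ i, Measurable (g i)) (hhm : ∀ i, Measurable (h i))
    (hindep : iIndepFun (Sum.elim g h) P)
    (hgd : ∀ i, ∀ s : ℝ, 0 ≤ s →
      P {ω | g i ω ≤ s} = ENNReal.ofReal (1 - Real.exp (-(lam * s))))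
    (hhd : ∀ i, ∀ s : ℝ, 0 ≤ s →
      P {ω | h i ω ≤ s} = ENNReal.ofReal (1 - Real.exp (-(mu * s))))
    (xs : ℕ → Ω → ℝ)
    (hxs : ∀ i ω, xs i ω = ∑ j ∈ Finset.range (i + 1), g j ω)
    (rho : ℝ) (hrho : rho = lam / mu)
    (t : ℝ) (ht : 0 < t) :
    P {ω | ∀ i, max (h i ω - h0) 0 / (xs i ω - x) ≤ t}
      = ENNReal.ofReal
          (Real.exp (-(rho / t) * Real.exp (-(mu * h0)) * Real.exp (mu * t * x))) := by
  have hmeas : Measurable fun ω j => Sum.elim g h j ω :=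
    measurable_pi_lambda _ (by rintro (i | i) <;> simp [hgm, hhm])
  have hgpos : ∀ᵐ ω ∂P, ∀ j, 0 < g j ω := ae_all_iff.2 fun j => by
    have hnull : P {ω | g j ω ≤ 0} = 0 := by simpa using hgd j 0 le_rfl
    exact (measure_eq_zero_iff_ae_notMem.1 hnull).mono fun _ hω => not_le.1 hω
  have hevent : {ω | ∀ i, max (h i ω - h0) 0 / (xs i ω - x) ≤ t}
      =ᵐ[P] (fun ω j => Sum.elim g h j ω) ⁻¹' ⋂ n, belowLine t (h0 - t * x) n := by
    filter_upwards [hgpos] with ω hω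
    refine propext ((forall_congr' fun i => ?_).trans mem_iInter_belowLine.symm)
    have hd : 0 < xs i ω - x := by
      rw [hxs]; linarith [Finset.sum_nonneg fun j (_ : j ∈ Finset.range (i + 1)) => (hω j).le]
    rw [max_sub_zero_div_le_iff hd ht.le, hxs]
    dsimp only [Sum.elim_inl, Sum.elim_inr]
    exact ⟨fun hi => by linarith, fun hi => by linarith⟩
  rw [measure_congr hevent, ← Measure.map_apply hmeas
      (MeasurableSet.iInter fun n => measurableSet_belowLine _ _ n),
    map_eq_gapMarkMeasure hgm hhm hindep (fun i => map_eq_expMeasure (hgm i) hlam (hgd i))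
      (fun i => map_eq_expMeasure (hhm i) hmu (hhd i)),
    gapMarkMeasure_iInter_belowLine hlam hmu ht (by nlinarith), lineMass, hrho, div_div,
    show -(mu * (h0 - t * x)) = -(mu * h0) + mu * t * x by ring, exp_add]
  ring_nf
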